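/- For all n ≥ 0, c_2c_3c_4·α^n + c_1c_3c_4·β^n + c_1c_2c_4·γ^n + c_1c_2c_3·δ^n = −(1/563)·V_n, where V_n is the Tetranacci-type sequence with V_0 = −5, V_1 = 2, V_2 = 13, V_3 = 32 and V_n = V_{n−1} + V_{n−2} + V_{n−3} + V_{n−4} for n ≥ 4. -/

import Mathlib

/-!
Put `d_r = ∏_{s ≠ r} (r - s)` for each root `r`, so that `c_r d_r = r²`. By Vieta `αβγδ = -1`,
and `d_α d_β d_γ d_δ` is the discriminant `-563` of `P = X⁴ - X³ - X² - X - 1`; hence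
`c₁c₂c₃c₄ = -1/563` and the left-hand side at `n + 2` equals `-(1/563) ∑_r d_r rⁿ`.
Since `d_r = P'(r)`, this sum is `4pₙ₊₃ - 3pₙ₊₂ - 2pₙ₊₁ - pₙ` in the power sums
`pₖ = αᵏ + βᵏ + γᵏ + δᵏ`, a Tetranacci sequence with initial values `4, 1, 3, 7`, and comparing
initial values identifies it with `V_{n+2}`. Both sides of the claim are Tetranacci sequences, so
agreement from `n = 2` on extends to `n = 0, 1`.
-/

/-- A Tetranacci-type sequence. -/
def seqV : ℕ → ℤ
  | 0 => (-5)
  | 1 => 2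
  | 2 => 13
  | 3 => 32
  | n + 4 => seqV (n + 3) + seqV (n + 2) + seqV (n + 1) + seqV n

def IsTetranacci {R : Type*} [Add R] (u : ℕ → R) : Prop :=
  ∀ n, u (n + 4) = u (n + 3) + u (n + 2) + u (n + 1) + u n

namespace IsTetranacci

variable {R : Type*}

theorem add [AddCommMonoid R] {u v : ℕ → R} (hu : IsTetranacci u) (hv : IsTetranacci v) :
    IsTetranacci (fun n => u n + v n) := fun n => by
  simp only [hu n, hv n]
  abel

theorem const_mul [Semiring R] {u : ℕ → R} (hu : IsTetranacci u) (c : R) :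
    IsTetranacci (fun n => c * u n) := fun n => by
  simp only [hu n, mul_add]

theorem pow [CommRing R] {r : R} (hr : r ^ 4 - r ^ 3 - r ^ 2 - r - 1 = 0) :
    IsTetranacci (r ^ ·) := fun n => by
  linear_combination r ^ n * hr

theorem ext [Add R] {u v : ℕ → R} (hu : IsTetranacci u) (hv : IsTetranacci v)
    (h₀ : u 0 = v 0) (h₁ : u 1 = v 1) (h₂ : u 2 = v 2) (h₃ : u 3 = v 3) : u = v := by
  funext n
  induction n using Nat.strong_induction_on with
  | _ n ih =>
    match n with
    | 0 => exact h₀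
    | 1 => exact h₁
    | 2 => exact h₂
    | 3 => exact h₃
    | n + 4 => rw [hu, hv, ih n (by omega), ih (n + 1) (by omega), ih (n + 2) (by omega),
        ih (n + 3) (by omega)]

theorem eq_of_succ_eq [AddCancelCommMonoid R] {u v : ℕ → R} (hu : IsTetranacci u)
    (hv : IsTetranacci v) (h : ∀ n, u (n + 1) = v (n + 1)) : u = v := by
  funext n
  cases n with
  | zero =>
    have h₄ := hu 0
    rw [h 3, h 2, h 1, h 0, hv 0] at h₄
    exact (add_left_cancel h₄).symm
  | succ n => exact h n

theorem eq_of_add_two_eq [AddCancelCommMonoid R] {u v : ℕ → R}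
    (hu : IsTetranacci u) (hv : IsTetranacci v) (h : ∀ n, u (n + 2) = v (n + 2)) : u = v :=
  hu.eq_of_succ_eq hv <| congrFun <| eq_of_succ_eq (fun n => hu (n + 1))
    (fun n => hv (n + 1)) h

end IsTetranacci

theorem isTetranacci_seqV {R : Type*} [AddGroupWithOne R] : IsTetranacci (fun n => (seqV n : R)) :=
  fun n => by simp only [seqV, Int.cast_add]

theorem seqV_add_two_eq {R : Type*} [CommRing R] {p : ℕ → R} (hp : IsTetranacci p)
    (h₀ : p 0 = 4) (h₁ : p 1 = 1) (h₂ : p 2 = 3) (h₃ : p 3 = 7) (n : ℕ) :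
    (seqV (n + 2) : R) = 4 * p (n + 3) - 3 * p (n + 2) - 2 * p (n + 1) - p n := by
  have h₄ : p 4 = 15 := by rw [hp 0, h₀, h₁, h₂, h₃]; norm_num
  have h₅ : p 5 = 26 := by rw [hp 1, h₄, h₁, h₂, h₃]; norm_num
  have h₆ : p 6 = 51 := by rw [hp 2, h₅, h₄, h₂, h₃]; norm_num
  refine congrFun (IsTetranacci.ext (u := fun n => (seqV (n + 2) : R))
    (v := fun n => 4 * p (n + 3) - 3 * p (n + 2) - 2 * p (n + 1) - p n) (fun n => ?_) (fun n => ?_)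
    ?_ ?_ ?_ ?_) n
  · exact isTetranacci_seqV (n + 2)
  · linear_combination 4 * hp (n + 3) - 3 * hp (n + 2) - 2 * hp (n + 1) - hp n
  all_goals norm_num [seqV, h₀, h₁, h₂, h₃, h₄, h₅, h₆]

section Quartic

variable {R : Type*} [CommRing R]

/-- The discriminant of `X⁴ + a X³ + b X² + c X + d`. -/
def quarticDiscr (a b c d : R) : R :=
  256 * d ^ 3 - 192 * a * c * d ^ 2 - 128 * b ^ 2 * d ^ 2 + 144 * b * c ^ 2 * d - 27 * c ^ 4
    + 144 * a ^ 2 * b * d ^ 2 - 6 * a ^ 2 * c ^ 2 * d - 80 * a * b ^ 2 * c * d + 18 * a * b * c ^ 3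
    + 16 * b ^ 4 * d - 4 * b ^ 3 * c ^ 2 - 27 * a ^ 4 * d ^ 2 + 18 * a ^ 3 * b * c * d
    - 4 * a ^ 3 * c ^ 3 - 4 * a ^ 2 * b ^ 3 * d + a ^ 2 * b ^ 2 * c ^ 2

theorem sq_prod_sub_eq_quarticDiscr (x y z w : R) :
    ((x - y) * (x - z) * (x - w) * (y - z) * (y - w) * (z - w)) ^ 2
      = quarticDiscr (-(x + y + z + w)) (x * y + x * z + x * w + y * z + y * w + z * w)
          (-(x * y * z + x * y * w + x * z * w + y * z * w)) (x * y * z * w) := by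
  unfold quarticDiscr
  ring

theorem quartic_vieta [IsDomain R] {a b c d x y z w : R}
    (hx : x ^ 4 + a * x ^ 3 + b * x ^ 2 + c * x + d = 0)
    (hy : y ^ 4 + a * y ^ 3 + b * y ^ 2 + c * y + d = 0)
    (hz : z ^ 4 + a * z ^ 3 + b * z ^ 2 + c * z + d = 0)
    (hw : w ^ 4 + a * w ^ 3 + b * w ^ 2 + c * w + d = 0)
    (hxy : x ≠ y) (hxz : x ≠ z) (hxw : x ≠ w) (hyz : y ≠ z) (hyw : y ≠ w) (hzw : z ≠ w) :
    x + y + z + w = -a ∧ x * y + x * z + x * w + y * z + y * w + z * w = b ∧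
      x * y * z + x * y * w + x * z * w + y * z * w = -c ∧ x * y * z * w = d := by
  -- successive divided differences of the quartic vanish at distinct roots
  have hxy' : x ^ 3 + x ^ 2 * y + x * y ^ 2 + y ^ 3 + a * (x ^ 2 + x * y + y ^ 2) + b * (x + y) + c
      = 0 := mul_left_cancel₀ (sub_ne_zero.2 hxy) (by linear_combination hx - hy)
  have hxz' : x ^ 3 + x ^ 2 * z + x * z ^ 2 + z ^ 3 + a * (x ^ 2 + x * z + z ^ 2) + b * (x + z) + c
      = 0 := mul_left_cancel₀ (sub_ne_zero.2 hxz) (by linear_combination hx - hz)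
  have hxw' : x ^ 3 + x ^ 2 * w + x * w ^ 2 + w ^ 3 + a * (x ^ 2 + x * w + w ^ 2) + b * (x + w) + c
      = 0 := mul_left_cancel₀ (sub_ne_zero.2 hxw) (by linear_combination hx - hw)
  have hxyz : x ^ 2 + y ^ 2 + z ^ 2 + x * y + x * z + y * z + a * (x + y + z) + b = 0 :=
    mul_left_cancel₀ (sub_ne_zero.2 hyz) (by linear_combination hxy' - hxz')
  have hxyw : x ^ 2 + y ^ 2 + w ^ 2 + x * y + x * w + y * w + a * (x + y + w) + b = 0 :=
    mul_left_cancel₀ (sub_ne_zero.2 hyw) (by linear_combination hxy' - hxw')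
  have h₁ : x + y + z + w = -a :=
    mul_left_cancel₀ (sub_ne_zero.2 hzw) (by linear_combination hxyz - hxyw)
  have h₂ : x * y + x * z + x * w + y * z + y * w + z * w = b := by
    linear_combination (x + y + z) * h₁ - hxyz
  -- comparing `X⁴ + a X³ + b X² + c X + d` with `(X - x)(X - y)(X - z)(X - w)` at `x` and `y`
  have hx' : (x * y * z + x * y * w + x * z * w + y * z * w + c) * x = x * y * z * w - d := by
    linear_combination hx - x ^ 3 * h₁ + x ^ 2 * h₂
  have hy' : (x * y * z + x * y * w + x * z * w + y * z * w + c) * y = x * y * z * w - d := by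
    linear_combination hy - y ^ 3 * h₁ + y ^ 2 * h₂
  have h₃ : x * y * z + x * y * w + x * z * w + y * z * w = -c :=
    mul_left_cancel₀ (sub_ne_zero.2 hxy) (by linear_combination hx' - hy')
  exact ⟨h₁, h₂, h₃, by linear_combination -hx' + x * h₃⟩

theorem tetranacci_vieta [IsDomain R] {x y z w : R}
    (hx : x ^ 4 - x ^ 3 - x ^ 2 - x - 1 = 0) (hy : y ^ 4 - y ^ 3 - y ^ 2 - y - 1 = 0)
    (hz : z ^ 4 - z ^ 3 - z ^ 2 - z - 1 = 0) (hw : w ^ 4 - w ^ 3 - w ^ 2 - w - 1 = 0)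
    (hxy : x ≠ y) (hxz : x ≠ z) (hxw : x ≠ w) (hyz : y ≠ z) (hyw : y ≠ w) (hzw : z ≠ w) :
    x + y + z + w = 1 ∧ x * y + x * z + x * w + y * z + y * w + z * w = -1 ∧
      x * y * z + x * y * w + x * z * w + y * z * w = 1 ∧ x * y * z * w = -1 := by
  simpa using quartic_vieta (a := -1) (b := -1) (c := -1) (d := -1) (by linear_combination hx)
    (by linear_combination hy) (by linear_combination hz) (by linear_combination hw)
    hxy hxz hxw hyz hyw hzw

end Quartic

theorem triple_prod_mul_pow_add_two {K : Type*} [Field K]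
    {c₁ c₂ c₃ c₄ d₁ d₂ d₃ d₄ r₁ r₂ r₃ r₄ : K} (h₁ : c₁ * d₁ = r₁ ^ 2) (h₂ : c₂ * d₂ = r₂ ^ 2)
    (h₃ : c₃ * d₃ = r₃ ^ 2) (h₄ : c₄ * d₄ = r₄ ^ 2) (hd : d₁ * d₂ * d₃ * d₄ ≠ 0) (n : ℕ) :
    c₂ * c₃ * c₄ * r₁ ^ (n + 2) + c₁ * c₃ * c₄ * r₂ ^ (n + 2) + c₁ * c₂ * c₄ * r₃ ^ (n + 2)
        + c₁ * c₂ * c₃ * r₄ ^ (n + 2)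
      = (r₁ * r₂ * r₃ * r₄) ^ 2 / (d₁ * d₂ * d₃ * d₄)
        * (d₁ * r₁ ^ n + d₂ * r₂ ^ n + d₃ * r₃ ^ n + d₄ * r₄ ^ n) := by
  have hC : c₁ * c₂ * c₃ * c₄ = (r₁ * r₂ * r₃ * r₄) ^ 2 / (d₁ * d₂ * d₃ * d₄) := by
    rw [eq_div_iff hd, mul_pow, mul_pow, mul_pow, ← h₁, ← h₂, ← h₃, ← h₄]
    ring
  rw [← hC]
  linear_combination (-(c₂ * c₃ * c₄ * r₁ ^ n)) * h₁ - c₁ * c₃ * c₄ * r₂ ^ n * h₂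
    - c₁ * c₂ * c₄ * r₃ ^ n * h₃ - c₁ * c₂ * c₃ * r₄ ^ n * h₄

theorem seqV_add_two_eq_sum_prod_sub_mul_pow {R : Type*} [CommRing R] {x y z w : R}
    (hx : x ^ 4 - x ^ 3 - x ^ 2 - x - 1 = 0) (hy : y ^ 4 - y ^ 3 - y ^ 2 - y - 1 = 0)
    (hz : z ^ 4 - z ^ 3 - z ^ 2 - z - 1 = 0) (hw : w ^ 4 - w ^ 3 - w ^ 2 - w - 1 = 0)
    (h₁ : x + y + z + w = 1) (h₂ : x * y + x * z + x * w + y * z + y * w + z * w = -1)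
    (h₃ : x * y * z + x * y * w + x * z * w + y * z * w = 1) (n : ℕ) :
    (seqV (n + 2) : R) = (x - y) * (x - z) * (x - w) * x ^ n + (y - x) * (y - z) * (y - w) * y ^ n
      + (z - x) * (z - y) * (z - w) * z ^ n + (w - x) * (w - y) * (w - z) * w ^ n := by
  have hp : IsTetranacci (fun k => x ^ k + y ^ k + z ^ k + w ^ k) :=
    (((IsTetranacci.pow hx).add (.pow hy)).add (.pow hz)).add (.pow hw)
  rw [seqV_add_two_eq hp (by norm_num) (by simpa using h₁)
    (by linear_combination (x + y + z + w + 1) * h₁ - 2 * h₂)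
    (by linear_combination ((x + y + z + w) ^ 2 + (x + y + z + w) + 4) * h₁
      - 3 * (x + y + z + w) * h₂ + 3 * h₃)]
  -- `(x - y)(x - z)(x - w) = 4x³ - 3σ₁x² + 2σ₂x - σ₃` is the derivative of `∏ (X - r)` at `x`
  linear_combination 3 * (x ^ (n + 2) + y ^ (n + 2) + z ^ (n + 2) + w ^ (n + 2)) * h₁
    - 2 * (x ^ (n + 1) + y ^ (n + 1) + z ^ (n + 1) + w ^ (n + 1)) * h₂
    + (x ^ n + y ^ n + z ^ n + w ^ n) * h₃

theorem tetra_c_triple_prod (α β γ δ : ℂ)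
    (hα : α ^ 4 - α ^ 3 - α ^ 2 - α - 1 = 0) (hβ : β ^ 4 - β ^ 3 - β ^ 2 - β - 1 = 0)
    (hγ : γ ^ 4 - γ ^ 3 - γ ^ 2 - γ - 1 = 0) (hδ : δ ^ 4 - δ ^ 3 - δ ^ 2 - δ - 1 = 0)
    (hαβ : α ≠ β) (hαγ : α ≠ γ) (hαδ : α ≠ δ) (hβγ : β ≠ γ) (hβδ : β ≠ δ) (hγδ : γ ≠ δ)
    (c₁ c₂ c₃ c₄ : ℂ)
    (hc₁ : c₁ = α ^ 2 / ((α - β) * (α - γ) * (α - δ)))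
    (hc₂ : c₂ = β ^ 2 / ((β - α) * (β - γ) * (β - δ)))
    (hc₃ : c₃ = γ ^ 2 / ((γ - α) * (γ - β) * (γ - δ)))
    (hc₄ : c₄ = δ ^ 2 / ((δ - α) * (δ - β) * (δ - γ))) (n : ℕ) :
    c₂ * c₃ * c₄ * α ^ n + c₁ * c₃ * c₄ * β ^ n + c₁ * c₂ * c₄ * γ ^ n
      + c₁ * c₂ * c₃ * δ ^ n = -(1 / 563 : ℂ) * seqV n := by
  obtain ⟨e₁, e₂, e₃, e₄⟩ := tetranacci_vieta hα hβ hγ hδ hαβ hαγ hαδ hβγ hβδ hγδ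
  have hΔ : (α - β) * (α - γ) * (α - δ) * ((β - α) * (β - γ) * (β - δ))
      * ((γ - α) * (γ - β) * (γ - δ)) * ((δ - α) * (δ - β) * (δ - γ)) = -563 := by
    have hD := sq_prod_sub_eq_quarticDiscr α β γ δ
    rw [e₁, e₂, e₃, e₄] at hD
    norm_num [quarticDiscr] at hD
    linear_combination hD
  have h₁ : c₁ * ((α - β) * (α - γ) * (α - δ)) = α ^ 2 := by
    rw [hc₁, div_mul_cancel₀ _ (by simp [sub_eq_zero, hαβ, hαγ, hαδ])]
  have h₂ : c₂ * ((β - α) * (β - γ) * (β - δ)) = β ^ 2 := by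
    rw [hc₂, div_mul_cancel₀ _ (by simp [sub_eq_zero, hαβ.symm, hβγ, hβδ])]
  have h₃ : c₃ * ((γ - α) * (γ - β) * (γ - δ)) = γ ^ 2 := by
    rw [hc₃, div_mul_cancel₀ _ (by simp [sub_eq_zero, hαγ.symm, hβγ.symm, hγδ])]
  have h₄ : c₄ * ((δ - α) * (δ - β) * (δ - γ)) = δ ^ 2 := by
    rw [hc₄, div_mul_cancel₀ _ (by simp [sub_eq_zero, hαδ.symm, hβδ.symm, hγδ.symm])]
  refine congrFun (IsTetranacci.eq_of_add_two_eq (u := fun n => c₂ * c₃ * c₄ * α ^ n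
    + c₁ * c₃ * c₄ * β ^ n + c₁ * c₂ * c₄ * γ ^ n + c₁ * c₂ * c₃ * δ ^ n)
    (v := fun n => -(1 / 563 : ℂ) * seqV n) ?_ (isTetranacci_seqV.const_mul _) fun n => ?_) n
  · exact ((((IsTetranacci.pow hα).const_mul _).add ((IsTetranacci.pow hβ).const_mul _)).add
      ((IsTetranacci.pow hγ).const_mul _)).add ((IsTetranacci.pow hδ).const_mul _)
  · rw [triple_prod_mul_pow_add_two h₁ h₂ h₃ h₄ (by rw [hΔ]; norm_num),
      seqV_add_two_eq_sum_prod_sub_mul_pow hα hβ hγ hδ e₁ e₂ e₃, hΔ, e₄]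
    norm_num
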